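/- arXiv:1802.08955 — 2 statements merged into one kernel-verified Lean document; each statement's English description precedes it below -/
import Mathlib

section
/- Let G = G₁ ⊕ G₂ be the 1-sum of two graphs G₁ and G₂ glued at a single common vertex v, with nonnegative edge weights w whose restrictions to E(Gᵢ) are wᵢ. Then for any vertex v₁ ∈ V(G₁), k(G, w, v₁) = min{ k(G₁, w₁, v₁), k(G₂, w₂, v) }. -/
open scoped Classical

variable {V E : Type*}

/-- The arc relation of a partial orientation `d`: there is an arc `u → v` if some
non-loop edge of `F` is directed from `u` to `v`. (Loops are never oriented/used.) -/
def arcRel (ends : E → Sym2 V) (F : Set E) (d : E → V × V) (u v : V) : Prop :=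
  ∃ e ∈ F, ¬ (ends e).IsDiag ∧ d e = (u, v)

/-- `d` is an orientation of the (non-loop) edges of `F`: the chosen direction of each
edge is compatible with its endpoints. -/
def IsOrientation (ends : E → Sym2 V) (F : Set E) (d : E → V × V) : Prop :=
  ∀ e ∈ F, ¬ (ends e).IsDiag → ends e = s((d e).1, (d e).2)

/-- The orientation `d` is acyclic: no directed cycle. -/
def AcyclicOn (ends : E → Sym2 V) (F : Set E) (d : E → V × V) : Prop :=
  ∀ v, ¬ Relation.TransGen (arcRel ends F d) v v

/-- `r` is the unique vertex of `S` with indegree `0` in the orientation `d`. -/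
def RootedAt (ends : E → Sym2 V) (F : Set E) (S : Set V) (d : E → V × V) (r : V) : Prop :=
  r ∈ S ∧ (∀ u, ¬ arcRel ends F d u r) ∧ ∀ v ∈ S, (∀ u, ¬ arcRel ends F d u v) → v = r

/-- `A` is (the edge set of) a spanning `r`-arborescence of the digraph obtained by
orienting the edges of `F` by `d`, spanning the vertex set `S`: every `v ∈ S`, `v ≠ r`,
has exactly one incoming edge of `A`, no edge of `A` enters `r`, and every vertex of `S`
is reachable from `r` along edges of `A`. -/
def IsArbM (ends : E → Sym2 V) (F : Set E) (S : Set V) (d : E → V × V) (r : V)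
    (A : Set E) : Prop :=
  A ⊆ F ∧ (∀ e ∈ A, ¬ (ends e).IsDiag) ∧
  (∀ v ∈ S, v ≠ r → ∃! e, e ∈ A ∧ (d e).2 = v) ∧
  (∀ e ∈ A, (d e).1 ∈ S ∧ (d e).2 ∈ S ∧ (d e).2 ≠ r) ∧
  (∀ v ∈ S, Relation.ReflTransGen (fun a b => ∃ e ∈ A, d e = (a, b)) r v)

/-- `kOn ends F S w r`: the maximum, over `r`-acyclic orientations `d` of the subgraph
with edges `F` and vertices `S`, of the maximum value of a weighted packing of spanning
`r`-arborescences subject to the capacities `w`. -/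
noncomputable def kOn [Fintype E] (ends : E → Sym2 V) (F : Set E) (S : Set V)
    (w : E → ℝ) (r : V) : ℝ :=
  sSup {x : ℝ | ∃ d : E → V × V, IsOrientation ends F d ∧ AcyclicOn ends F d ∧
    RootedAt ends F S d r ∧
    ∃ (t : ℕ) (lam : Fin t → ℝ) (A : Fin t → Set E),
      (∀ i, 0 ≤ lam i) ∧ (∀ i, IsArbM ends F S d r (A i)) ∧
      (∀ e ∈ F, ∑ i, (if e ∈ A i then lam i else 0) ≤ w e) ∧
      x = ∑ i, lam i}

/-- `kAll ends F S w`: the maximum of `kOn ends F S w r` over all roots `r ∈ S`. -/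
noncomputable def kAll [Fintype E] (ends : E → Sym2 V) (F : Set E) (S : Set V)
    (w : E → ℝ) : ℝ :=
  sSup ((fun r => kOn ends F S w r) '' S)

/-!
Restricting an acyclic orientation of `G` rooted at `v₁` to `G₂` makes `v` its unique source
(every other vertex of `G₂` still needs an entering arc, and those come from `G₂`), and every
arborescence of `G` restricts to arborescences of `G₁` and of `G₂`; hence
`k(G) ≤ min (k(G₁)) (k(G₂))`. Conversely, orientations of `G₁` and `G₂` rooted at `v₁` and `v`
glue to one of `G` rooted at `v₁` (a cycle would have to pass through the cut vertex twice),
arborescences glue along `v`, and the product coupling of two packings of values `x₁`, `x₂`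
rescaled to total mass `min x₁ x₂` respects both capacity constraints.
-/

open Set

theorem Relation.exists_source_of_acyclic {α : Type*} [Finite α] {R : α → α → Prop}
    (hR : ∀ x, ¬ TransGen R x x) {S : Set α} (hS : S.Nonempty) :
    ∃ m ∈ S, ∀ u ∈ S, ¬ R u m := by
  have : IsTrans α (TransGen R) := ⟨fun _ _ _ => TransGen.trans⟩
  have : Std.Irrefl (TransGen R) := ⟨hR⟩
  obtain ⟨m, hm, hmin⟩ := (Finite.wellFounded_of_trans_of_irrefl (TransGen R)).has_min S hS
  exact ⟨m, hm, fun u hu h => hmin u hu (.single h)⟩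

theorem Relation.TransGen.mem_and_mem {α : Type*} {R : α → α → Prop} {S : Set α}
    (hR : ∀ a b, R a b → a ∈ S ∧ b ∈ S) {a b : α} (h : TransGen R a b) : a ∈ S ∧ b ∈ S := by
  induction h with
  | single h => exact hR _ _ h
  | tail _ h ih => exact ⟨ih.1, (hR _ _ h).2⟩

theorem Relation.acyclic_sup {α : Type*} {R₁ R₂ : α → α → Prop} {S₁ S₂ : Set α} {v : α}
    (hR₁ : ∀ a b, R₁ a b → a ∈ S₁ ∧ b ∈ S₁) (hR₂ : ∀ a b, R₂ a b → a ∈ S₂ ∧ b ∈ S₂)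
    (hI : S₁ ∩ S₂ ⊆ {v}) (h₁ : ∀ x, ¬ TransGen R₁ x x) (h₂ : ∀ x, ¬ TransGen R₂ x x)
    (u : α) : ¬ TransGen (R₁ ⊔ R₂) u u := by
  -- a path switches between `R₁` and `R₂` at most once, and only at `v`
  have key : ∀ a b, TransGen (R₁ ⊔ R₂) a b →
      TransGen R₁ a b ∨ TransGen R₂ a b ∨
      (TransGen R₁ a v ∧ TransGen R₂ v b) ∨ (TransGen R₂ a v ∧ TransGen R₁ v b) := by
    intro a b h
    induction h with
    | single h => exact h.imp .single (fun h => .inl (.single h))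
    | @tail b c _ hbc ih =>
      rcases ih with ih | ih | ⟨ih₁, ih₂⟩ | ⟨ih₁, ih₂⟩ <;> rcases hbc with h | h
      · exact .inl (ih.tail h)
      · obtain rfl : b = v := hI ⟨(ih.mem_and_mem hR₁).2, (hR₂ _ _ h).1⟩
        exact .inr (.inr (.inl ⟨ih, .single h⟩))
      · obtain rfl : b = v := hI ⟨(hR₁ _ _ h).1, (ih.mem_and_mem hR₂).2⟩
        exact .inr (.inr (.inr ⟨ih, .single h⟩))
      · exact .inr (.inl (ih.tail h))
      · obtain rfl : b = v := hI ⟨(hR₁ _ _ h).1, (ih₂.mem_and_mem hR₂).2⟩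
        exact absurd ih₂ (h₂ b)
      · exact .inr (.inr (.inl ⟨ih₁, ih₂.tail h⟩))
      · exact .inr (.inr (.inr ⟨ih₁, ih₂.tail h⟩))
      · obtain rfl : b = v := hI ⟨(ih₂.mem_and_mem hR₁).2, (hR₂ _ _ h).1⟩
        exact absurd ih₂ (h₁ b)
  intro h
  rcases key u u h with h | h | ⟨h₁', h₂'⟩ | ⟨h₁', h₂'⟩
  · exact h₁ u h
  · exact h₂ u h
  · obtain rfl : u = v := hI ⟨(h₁'.mem_and_mem hR₁).1, (h₂'.mem_and_mem hR₂).2⟩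
    exact h₁ u h₁'
  · obtain rfl : u = v := hI ⟨(h₂'.mem_and_mem hR₁).2, (h₁'.mem_and_mem hR₂).1⟩
    exact h₂ u h₁'

/-- The part of an `R`-path after its last visit to `c`. -/
theorem Relation.ReflTransGen.lift_final_segment {α : Type*} {R R' : α → α → Prop}
    {T : Set α} {a b c : α} (h : ReflTransGen R a b) (hb : b ∈ T) (ha : a ∈ T → a = c)
    (hstep : ∀ x y, R x y → y ∈ T → y ≠ c → R' x y ∧ x ∈ T) : ReflTransGen R' c b := by
  induction h with
  | refl => rw [ha hb]
  | @tail x y _ hxy ih =>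
    by_cases hyc : y = c
    · rw [hyc]
    · obtain ⟨hxy', hx⟩ := hstep x y hxy hb hyc
      exact (ih hx).tail hxy'

theorem Real.sSup_eq_min_of_subset_of_min_mem {K K₁ K₂ : Set ℝ} (hb₁ : BddAbove K₁)
    (hb₂ : BddAbove K₂) (h₁ : ∀ x ∈ K₁, 0 ≤ x) (h₂ : ∀ x ∈ K₂, 0 ≤ x) (hK₁ : K ⊆ K₁)
    (hK₂ : K ⊆ K₂) (hmin : ∀ x₁ ∈ K₁, ∀ x₂ ∈ K₂, min x₁ x₂ ∈ K) :
    sSup K = min (sSup K₁) (sSup K₂) := by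
  rcases K₁.eq_empty_or_nonempty with rfl | ⟨x₁, hx₁⟩
  · rw [subset_empty_iff.1 hK₁, Real.sSup_empty, min_eq_left (Real.sSup_nonneg h₂)]
  rcases K₂.eq_empty_or_nonempty with rfl | ⟨x₂, hx₂⟩
  · rw [subset_empty_iff.1 hK₂, Real.sSup_empty, min_eq_right (Real.sSup_nonneg h₁)]
  apply le_antisymm
  · exact csSup_le ⟨_, hmin x₁ hx₁ x₂ hx₂⟩ fun x hx =>
      le_min (le_csSup hb₁ (hK₁ hx)) (le_csSup hb₂ (hK₂ hx))
  · refine le_of_forall_lt fun c hc => ?_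
    obtain ⟨y₁, hy₁, hcy₁⟩ := exists_lt_of_lt_csSup ⟨x₁, hx₁⟩ (hc.trans_le (min_le_left _ _))
    obtain ⟨y₂, hy₂, hcy₂⟩ := exists_lt_of_lt_csSup ⟨x₂, hx₂⟩ (hc.trans_le (min_le_right _ _))
    exact (lt_min hcy₁ hcy₂).trans_le (le_csSup (hb₁.mono hK₁) (hmin y₁ hy₁ y₂ hy₂))

theorem exists_coupling_sum_eq_min {ι κ : Type*} [Fintype ι] [Fintype κ] {a : ι → ℝ}
    {b : κ → ℝ} (ha : ∀ i, 0 ≤ a i) (hb : ∀ j, 0 ≤ b j) :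
    ∃ μ : ι → κ → ℝ, (∀ i j, 0 ≤ μ i j) ∧ (∀ i, ∑ j, μ i j ≤ a i) ∧
      (∀ j, ∑ i, μ i j ≤ b j) ∧ ∑ i, ∑ j, μ i j = min (∑ i, a i) (∑ j, b j) := by
  set A := ∑ i, a i
  set B := ∑ j, b j
  set m := min A B
  have hA : 0 ≤ A := Finset.sum_nonneg fun i _ => ha i
  have hB : 0 ≤ B := Finset.sum_nonneg fun j _ => hb j
  have hm : 0 ≤ m := le_min hA hB
  have hscale : ∀ {x X : ℝ}, 0 ≤ x → 0 ≤ X → m ≤ X → m * (x / X) ≤ x := by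
    intro x X hx hX hmX
    rcases hX.eq_or_lt with rfl | hX
    · simpa using hx
    · calc m * (x / X) ≤ X * (x / X) := by gcongr
        _ = x := mul_div_cancel₀ x hX.ne'
  have hcancel : ∀ {X : ℝ}, 0 ≤ X → m ≤ X → m * (X / X) = m := by
    intro X hX hmX
    rcases hX.eq_or_lt with rfl | hX
    · simp [le_antisymm hmX hm]
    · rw [div_self hX.ne', mul_one]
  refine ⟨fun i j => m * (a i / A) * (b j / B), fun i j => ?_, fun i => ?_, fun j => ?_, ?_⟩
  · have := ha i; have := hb j; positivity
  · rw [← Finset.mul_sum, ← Finset.sum_div]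
    calc m * (a i / A) * (B / B) ≤ m * (a i / A) :=
          mul_le_of_le_one_right (by have := ha i; positivity) (div_self_le_one B)
      _ ≤ a i := hscale (ha i) hA (min_le_left A B)
  · rw [← Finset.sum_mul, ← Finset.mul_sum, ← Finset.sum_div, hcancel hA (min_le_left A B)]
    exact hscale (hb j) hB (min_le_right A B)
  · simp only [← Finset.mul_sum, ← Finset.sum_div, ← Finset.sum_mul]
    rw [hcancel hA (min_le_left A B), hcancel hB (min_le_right A B)]

section Orientations

variable {ends : E → Sym2 V} {F F' : Set E} {S S' : Set V} {d d' : E → V × V} {r r' : V}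

theorem arcRel_mono (hF : F ⊆ F') {a b : V} (h : arcRel ends F d a b) :
    arcRel ends F' d a b :=
  let ⟨e, he, hnd, hde⟩ := h
  ⟨e, hF he, hnd, hde⟩

theorem arcRel_univ_eq_sup (F : Set E) :
    arcRel ends univ d = arcRel ends F d ⊔ arcRel ends Fᶜ d := by
  ext a b
  refine ⟨fun ⟨e, _, hnd, hde⟩ => ?_, fun h => h.elim (arcRel_mono (subset_univ F))
    (arcRel_mono (subset_univ Fᶜ))⟩
  by_cases he : e ∈ F
  exacts [.inl ⟨e, he, hnd, hde⟩, .inr ⟨e, he, hnd, hde⟩]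

theorem arcRel_congr (h : EqOn d d' F) : arcRel ends F d = arcRel ends F d' := by
  ext a b
  exact exists_congr fun e => and_congr_right fun he => by rw [h he]

theorem AcyclicOn.mono (hF : F' ⊆ F) (h : AcyclicOn ends F d) : AcyclicOn ends F' d :=
  fun x hx => h x (Relation.TransGen.mono (fun _ _ => arcRel_mono hF) _ _ hx)

theorem IsOrientation.mono (hF : F' ⊆ F) (h : IsOrientation ends F d) :
    IsOrientation ends F' d :=
  fun e he => h e (hF he)

theorem IsOrientation.univ_of_compl (h₁ : IsOrientation ends F d)
    (h₂ : IsOrientation ends Fᶜ d) : IsOrientation ends univ d :=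
  fun e _ => if he : e ∈ F then h₁ e he else h₂ e he

theorem IsOrientation.mem_ends (h : IsOrientation ends F d) {e : E} (he : e ∈ F)
    (hnd : ¬ (ends e).IsDiag) : (d e).1 ∈ ends e ∧ (d e).2 ∈ ends e := by
  rw [h e he hnd]
  exact ⟨Sym2.mem_mk_left _ _, Sym2.mem_mk_right _ _⟩

theorem IsOrientation.arcRel_mem (h : IsOrientation ends F d)
    (hF : ∀ e ∈ F, ∀ x ∈ ends e, x ∈ S) {a b : V} (hab : arcRel ends F d a b) :
    a ∈ S ∧ b ∈ S := by
  obtain ⟨e, he, hnd, hde⟩ := hab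
  have hmem := h.mem_ends he hnd
  rw [hde] at hmem
  exact ⟨hF e he a hmem.1, hF e he b hmem.2⟩

def IsRootedAcyclic (ends : E → Sym2 V) (F : Set E) (S : Set V) (d : E → V × V) (r : V) :
    Prop :=
  IsOrientation ends F d ∧ AcyclicOn ends F d ∧ RootedAt ends F S d r

theorem IsRootedAcyclic.congr (h : EqOn d d' F) (hd : IsRootedAcyclic ends F S d r) :
    IsRootedAcyclic ends F S d' r := by
  obtain ⟨hor, hac, hrt⟩ := hd
  refine ⟨fun e he hnd => by rw [← h he]; exact hor e he hnd, ?_, ?_⟩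
  · rwa [AcyclicOn, ← arcRel_congr h]
  · rwa [RootedAt, ← arcRel_congr h]

theorem IsArbM.congr {A : Set E} (h : EqOn d d' F) (hA : IsArbM ends F S d r A) :
    IsArbM ends F S d' r A := by
  obtain ⟨hAF, hnd, huniq, hmem, hreach⟩ := hA
  have hA' : EqOn d d' A := h.mono hAF
  refine ⟨hAF, hnd, fun u hu hur => ?_, fun e he => hA' he ▸ hmem e he, fun u hu => ?_⟩
  · exact (existsUnique_congr fun e => and_congr_right fun he => by rw [hA' he]).1
      (huniq u hu hur)
  · exact Relation.ReflTransGen.mono (fun _ _ ⟨e, he, hde⟩ => ⟨e, he, hA' he ▸ hde⟩) _ _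
      (hreach u hu)

def IsArbPacking {ι : Type*} [Fintype ι] (ends : E → Sym2 V) (F : Set E) (S : Set V)
    (w : E → ℝ) (d : E → V × V) (r : V) (lam : ι → ℝ) (A : ι → Set E) : Prop :=
  (∀ i, 0 ≤ lam i) ∧ (∀ i, IsArbM ends F S d r (A i)) ∧
    ∀ e ∈ F, ∑ i, (if e ∈ A i then lam i else 0) ≤ w e

theorem IsArbPacking.congr {ι : Type*} [Fintype ι] {w : E → ℝ} {lam : ι → ℝ} {A : ι → Set E}
    (h : EqOn d d' F) (hP : IsArbPacking ends F S w d r lam A) :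
    IsArbPacking ends F S w d' r lam A :=
  ⟨hP.1, fun i => (hP.2.1 i).congr h, hP.2.2⟩

/-- What is needed for `d` to restrict to an orientation of `(S', F')` rooted at `r'`. -/
structure IsEnteringArcSet (ends : E → Sym2 V) (F : Set E) (d : E → V × V) (F' : Set E)
    (S' : Set V) (r' : V) : Prop where
  mem_of_head : ∀ e ∈ F, ¬ (ends e).IsDiag → (d e).2 ∈ S' → (d e).2 ≠ r' → e ∈ F'
  ends_mem : ∀ e ∈ F', ¬ (ends e).IsDiag → (d e).1 ∈ S' ∧ (d e).2 ∈ S' ∧ (d e).2 ≠ r'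

theorem RootedAt.restrict (hd : RootedAt ends F S d r) (hS : S' ⊆ S) (hr' : r' ∈ S')
    (hr : r ∈ S' → r = r') (h : IsEnteringArcSet ends F d F' S' r') :
    RootedAt ends F' S' d r' := by
  refine ⟨hr', fun u ⟨e, he, hnd, hde⟩ => (h.ends_mem e he hnd).2.2 (by rw [hde]),
    fun u hu hsrc => ?_⟩
  by_contra hur'
  have hur : u ≠ r := fun hur => hur' (hur.trans (hr (hur ▸ hu)))
  obtain ⟨a, e, he, hnd, hde⟩ : ∃ a, arcRel ends F d a u := by
    by_contra! hsrc'
    exact hur (hd.2.2 u (hS hu) hsrc')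
  have hhead : (d e).2 = u := by rw [hde]
  exact hsrc a ⟨e, h.mem_of_head e he hnd (hhead ▸ hu) (hhead ▸ hur'), hnd, hde⟩

theorem IsRootedAcyclic.restrict (hd : IsRootedAcyclic ends F S d r) (hF : F' ⊆ F)
    (hS : S' ⊆ S) (hr' : r' ∈ S') (hr : r ∈ S' → r = r')
    (h : IsEnteringArcSet ends F d F' S' r') : IsRootedAcyclic ends F' S' d r' :=
  ⟨hd.1.mono hF, hd.2.1.mono hF, hd.2.2.restrict hS hr' hr h⟩

theorem IsArbM.restrict {A : Set E} (hA : IsArbM ends F S d r A) (hS : S' ⊆ S)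
    (hr : r ∈ S' → r = r') (h : IsEnteringArcSet ends F d F' S' r') :
    IsArbM ends F' S' d r' (A ∩ F') := by
  obtain ⟨hAF, hnd, huniq, -, hreach⟩ := hA
  have hin : ∀ e ∈ A, (d e).2 ∈ S' → (d e).2 ≠ r' → e ∈ F' :=
    fun e he => h.mem_of_head e (hAF he) (hnd e he)
  refine ⟨inter_subset_right, fun e he => hnd e he.1, fun u hu hur' => ?_,
    fun e he => h.ends_mem e he.2 (hnd e he.1), fun u hu => ?_⟩
  · have hur : u ≠ r := fun hur => hur' (hur.trans (hr (hur ▸ hu)))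
    obtain ⟨e, ⟨heA, rfl⟩, hunique⟩ := huniq u (hS hu) hur
    exact ⟨e, ⟨⟨heA, hin e heA hu hur'⟩, rfl⟩, fun e' he' => hunique e' ⟨he'.1.1, he'.2⟩⟩
  · refine (hreach u (hS hu)).lift_final_segment hu hr fun x y ⟨e, he, hde⟩ hy hyr => ?_
    have heF' : e ∈ F' := hin e he (by rw [hde]; exact hy) (by rw [hde]; exact hyr)
    have hx := (h.ends_mem e heF' (hnd e he)).1
    rw [hde] at hx
    exact ⟨⟨e, ⟨he, heF'⟩, hde⟩, hx⟩

theorem IsArbPacking.restrict {ι : Type*} [Fintype ι] {w : E → ℝ} {lam : ι → ℝ}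
    {A : ι → Set E} (hP : IsArbPacking ends F S w d r lam A) (hF : F' ⊆ F) (hS : S' ⊆ S)
    (hr : r ∈ S' → r = r') (h : IsEnteringArcSet ends F d F' S' r') :
    IsArbPacking ends F' S' w d r' lam (fun i => A i ∩ F') := by
  refine ⟨hP.1, fun i => (hP.2.1 i).restrict hS hr h, fun e he => ?_⟩
  simp only [mem_inter_iff, he, and_true]
  exact hP.2.2 e (hF he)

def packingValues (ends : E → Sym2 V) (F : Set E) (S : Set V) (w : E → ℝ) (r : V) : Set ℝ :=
  {x | ∃ d, IsRootedAcyclic ends F S d r ∧ ∃ (t : ℕ) (lam : Fin t → ℝ) (A : Fin t → Set E),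
    IsArbPacking ends F S w d r lam A ∧ x = ∑ i, lam i}

theorem kOn_eq_sSup_packingValues [Fintype E] (ends : E → Sym2 V) (F : Set E) (S : Set V)
    (w : E → ℝ) (r : V) : kOn ends F S w r = sSup (packingValues ends F S w r) := by
  simp only [kOn, packingValues, IsRootedAcyclic, IsArbPacking, and_assoc]

theorem IsArbPacking.sum_mem_packingValues {ι : Type*} [Fintype ι] {w : E → ℝ}
    {lam : ι → ℝ} {A : ι → Set E} (hd : IsRootedAcyclic ends F S d r)
    (hP : IsArbPacking ends F S w d r lam A) : ∑ i, lam i ∈ packingValues ends F S w r := by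
  let σ := (Fintype.equivFin ι).symm
  refine ⟨d, hd, _, lam ∘ σ, A ∘ σ, ⟨fun k => hP.1 _, fun k => hP.2.1 _, fun e he => ?_⟩,
    (Equiv.sum_comp σ lam).symm⟩
  exact (Equiv.sum_comp σ fun i => if e ∈ A i then lam i else 0).trans_le (hP.2.2 e he)

theorem packingValues_subset {w : E → ℝ} (hF : F' ⊆ F) (hS : S' ⊆ S) (hr' : r' ∈ S')
    (hr : r ∈ S' → r = r')
    (h : ∀ d, IsRootedAcyclic ends F S d r → IsEnteringArcSet ends F d F' S' r') :
    packingValues ends F S w r ⊆ packingValues ends F' S' w r' := by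
  rintro _ ⟨d, hd, t, lam, A, hP, rfl⟩
  exact ⟨d, hd.restrict hF hS hr' hr (h d hd), t, lam, _, hP.restrict hF hS hr (h d hd), rfl⟩

theorem nonneg_of_mem_packingValues {w : E → ℝ} {x : ℝ}
    (hx : x ∈ packingValues ends F S w r) : 0 ≤ x := by
  obtain ⟨-, -, t, lam, -, ⟨hlam, -⟩, rfl⟩ := hx
  exact Finset.sum_nonneg fun i _ => hlam i

theorem bddAbove_packingValues [Fintype E] {w : E → ℝ} (hS : ∃ u ∈ S, u ≠ r) :
    BddAbove (packingValues ends F S w r) := by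
  obtain ⟨u, hu, hur⟩ := hS
  refine ⟨∑ e, |w e|, ?_⟩
  rintro _ ⟨d, -, t, lam, A, ⟨hlam, hA, hcap⟩, rfl⟩
  -- each arborescence is nonempty: it has an edge entering `u`
  have hlam_le : ∀ i, lam i ≤ ∑ e, if e ∈ A i then lam i else 0 := by
    intro i
    obtain ⟨e, ⟨he, -⟩, -⟩ := (hA i).2.2.1 u hu hur
    calc lam i = if e ∈ A i then lam i else 0 := (if_pos he).symm
      _ ≤ _ := Finset.single_le_sum (f := fun e => if e ∈ A i then lam i else 0)
          (fun e _ => ite_nonneg (hlam i) le_rfl) (Finset.mem_univ e)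
  have hload : ∀ e, ∑ i, (if e ∈ A i then lam i else 0) ≤ |w e| := by
    intro e
    by_cases he : e ∈ F
    · exact (hcap e he).trans (le_abs_self _)
    · rw [Finset.sum_eq_zero fun i _ => if_neg fun h => he ((hA i).1 h)]
      exact abs_nonneg _
  calc ∑ i, lam i ≤ ∑ i, ∑ e, if e ∈ A i then lam i else 0 :=
        Finset.sum_le_sum fun i _ => hlam_le i
    _ = ∑ e, ∑ i, if e ∈ A i then lam i else 0 := Finset.sum_comm
    _ ≤ ∑ e, |w e| := Finset.sum_le_sum fun e _ => hload e


section OneSum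

variable {ends : E → Sym2 V} {S₁ S₂ : Set V} {E₁ : Set E} {v v₁ : V} {d : E → V × V}

theorem IsRootedAcyclic.not_arcRel_compl_cut [Finite V]
    (hd : IsRootedAcyclic ends univ univ d v₁) (hI : S₁ ∩ S₂ = {v}) (hv₁ : v₁ ∈ S₁)
    (hE₁ : ∀ e ∈ E₁, ∀ x ∈ ends e, x ∈ S₁) (hE₂ : ∀ e ∈ E₁ᶜ, ∀ x ∈ ends e, x ∈ S₂) (u : V) :
    ¬ arcRel ends E₁ᶜ d u v := by
  obtain ⟨hor, hac, -, -, hsrc⟩ := hd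
  obtain ⟨m, hm, hmin⟩ := Relation.exists_source_of_acyclic (hac.mono (subset_univ E₁ᶜ))
    ⟨v, (hI.superset rfl).2⟩
  have hm₂ : ∀ a, ¬ arcRel ends E₁ᶜ d a m := fun a ha =>
    hmin a ((hor.mono (subset_univ _)).arcRel_mem hE₂ ha).1 ha
  suffices m = v from this ▸ hm₂ u
  by_contra hmv
  have hm₁ : m ∉ S₁ := fun h => hmv (hI.subset ⟨h, hm⟩)
  -- otherwise `m` would be a second source of the whole orientation
  have hmv₁ : m = v₁ := hsrc m trivial fun a ha => by
    rw [arcRel_univ_eq_sup E₁] at ha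
    exact ha.elim (fun ha => hm₁ ((hor.mono (subset_univ _)).arcRel_mem hE₁ ha).2) (hm₂ a)
  exact hm₁ (hmv₁ ▸ hv₁)

theorem IsRootedAcyclic.isEnteringArcSet_left [Finite V]
    (hd : IsRootedAcyclic ends univ univ d v₁) (hI : S₁ ∩ S₂ = {v}) (hv₁ : v₁ ∈ S₁)
    (hE₁ : ∀ e ∈ E₁, ∀ x ∈ ends e, x ∈ S₁) (hE₂ : ∀ e ∈ E₁ᶜ, ∀ x ∈ ends e, x ∈ S₂) :
    IsEnteringArcSet ends univ d E₁ S₁ v₁ where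
  mem_of_head e _ hnd hhead _ := by
    by_contra he
    have hv : (d e).2 = v := hI.subset ⟨hhead, hE₂ e he _ (hd.1.mem_ends trivial hnd).2⟩
    exact hd.not_arcRel_compl_cut hI hv₁ hE₁ hE₂ (d e).1 ⟨e, he, hnd, by rw [← hv]⟩
  ends_mem e he hnd :=
    ⟨hE₁ e he _ (hd.1.mem_ends trivial hnd).1, hE₁ e he _ (hd.1.mem_ends trivial hnd).2,
      fun hv₁' => hd.2.2.2.1 (d e).1 ⟨e, trivial, hnd, by rw [← hv₁']⟩⟩

theorem IsRootedAcyclic.isEnteringArcSet_right [Finite V]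
    (hd : IsRootedAcyclic ends univ univ d v₁) (hI : S₁ ∩ S₂ = {v}) (hv₁ : v₁ ∈ S₁)
    (hE₁ : ∀ e ∈ E₁, ∀ x ∈ ends e, x ∈ S₁) (hE₂ : ∀ e ∈ E₁ᶜ, ∀ x ∈ ends e, x ∈ S₂) :
    IsEnteringArcSet ends univ d E₁ᶜ S₂ v where
  mem_of_head e _ hnd hhead hv he :=
    hv (hI.subset ⟨hE₁ e he _ (hd.1.mem_ends trivial hnd).2, hhead⟩)
  ends_mem e he hnd :=
    ⟨hE₂ e he _ (hd.1.mem_ends trivial hnd).1, hE₂ e he _ (hd.1.mem_ends trivial hnd).2,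
      fun hv => hd.not_arcRel_compl_cut hI hv₁ hE₁ hE₂ (d e).1 ⟨e, he, hnd, by rw [← hv]⟩⟩

theorem packingValues_subset_left [Finite V] {w : E → ℝ} (hI : S₁ ∩ S₂ = {v})
    (hv₁ : v₁ ∈ S₁) (hE₁ : ∀ e ∈ E₁, ∀ x ∈ ends e, x ∈ S₁)
    (hE₂ : ∀ e ∈ E₁ᶜ, ∀ x ∈ ends e, x ∈ S₂) :
    packingValues ends univ univ w v₁ ⊆ packingValues ends E₁ S₁ w v₁ :=
  packingValues_subset (subset_univ _) (subset_univ _) hv₁ (fun _ => rfl)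
    fun _ hd => hd.isEnteringArcSet_left hI hv₁ hE₁ hE₂

theorem packingValues_subset_right [Finite V] {w : E → ℝ} (hI : S₁ ∩ S₂ = {v})
    (hv₁ : v₁ ∈ S₁) (hE₁ : ∀ e ∈ E₁, ∀ x ∈ ends e, x ∈ S₁)
    (hE₂ : ∀ e ∈ E₁ᶜ, ∀ x ∈ ends e, x ∈ S₂) :
    packingValues ends univ univ w v₁ ⊆ packingValues ends E₁ᶜ S₂ w v :=
  packingValues_subset (subset_univ _) (subset_univ _) (hI.superset rfl).2
    (fun h => hI.subset ⟨hv₁, h⟩) fun _ hd => hd.isEnteringArcSet_right hI hv₁ hE₁ hE₂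

theorem AcyclicOn.univ_of_oneSum (hI : S₁ ∩ S₂ = {v}) (hE₁ : ∀ e ∈ E₁, ∀ x ∈ ends e, x ∈ S₁)
    (hE₂ : ∀ e ∈ E₁ᶜ, ∀ x ∈ ends e, x ∈ S₂) (hor : IsOrientation ends univ d)
    (h₁ : AcyclicOn ends E₁ d) (h₂ : AcyclicOn ends E₁ᶜ d) : AcyclicOn ends univ d := by
  intro x
  rw [arcRel_univ_eq_sup E₁]
  exact Relation.acyclic_sup (fun _ _ => (hor.mono (subset_univ _)).arcRel_mem hE₁)
    (fun _ _ => (hor.mono (subset_univ _)).arcRel_mem hE₂) hI.subset h₁ h₂ x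

theorem RootedAt.univ_of_oneSum (hU : S₁ ∪ S₂ = univ) (hI : S₁ ∩ S₂ = {v})
    (hE₂ : ∀ e ∈ E₁ᶜ, ∀ x ∈ ends e, x ∈ S₂) (hor : IsOrientation ends E₁ᶜ d)
    (h₁ : RootedAt ends E₁ S₁ d v₁) (h₂ : RootedAt ends E₁ᶜ S₂ d v) :
    RootedAt ends univ univ d v₁ := by
  have src₁ : ∀ x ∈ S₁, (∀ a, ¬ arcRel ends univ d a x) → x = v₁ := fun x hx hsrc =>
    h₁.2.2 x hx fun a ha => hsrc a (arcRel_mono (subset_univ _) ha)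
  refine ⟨trivial, fun u hu => ?_, fun u _ hsrc => ?_⟩
  · rw [arcRel_univ_eq_sup E₁] at hu
    refine hu.elim (h₁.2.1 u) fun hu => h₂.2.1 u ?_
    rwa [← hI.subset ⟨h₁.1, (hor.arcRel_mem hE₂ hu).2⟩]
  · rcases (hU.superset trivial : u ∈ S₁ ∪ S₂) with hu | hu
    · exact src₁ u hu hsrc
    · obtain rfl : u = v := h₂.2.2 u hu fun a ha => hsrc a (arcRel_mono (subset_univ _) ha)
      exact src₁ u (hI.superset rfl).1 hsrc

theorem IsArbM.union_of_oneSum {A₁ A₂ : Set E} (hU : S₁ ∪ S₂ = univ) (hI : S₁ ∩ S₂ = {v})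
    (hv₁ : v₁ ∈ S₁) (h₁ : IsArbM ends E₁ S₁ d v₁ A₁) (h₂ : IsArbM ends E₁ᶜ S₂ d v A₂) :
    IsArbM ends univ univ d v₁ (A₁ ∪ A₂) := by
  obtain ⟨-, hnd₁, huniq₁, hmem₁, hreach₁⟩ := h₁
  obtain ⟨-, hnd₂, huniq₂, hmem₂, hreach₂⟩ := h₂
  have hv : v ∈ S₁ := (hI.superset rfl).1
  refine ⟨subset_univ _, fun e he => he.elim (hnd₁ e) (hnd₂ e), fun u _ hu => ?_,
    fun e he => ⟨trivial, trivial, he.elim (fun he => (hmem₁ e he).2.2) fun he hv₁' => ?_⟩,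
    fun u _ => ?_⟩
  · by_cases hu₁ : u ∈ S₁
    · obtain ⟨e, he, hunique⟩ := huniq₁ u hu₁ hu
      refine ⟨e, ⟨.inl he.1, he.2⟩, fun e' ⟨he', hhead⟩ => he'.elim (hunique e' ⟨·, hhead⟩)
        fun he' => ?_⟩
      subst hhead
      exact absurd (hI.subset ⟨hu₁, (hmem₂ e' he').2.1⟩) (hmem₂ e' he').2.2
    · have hu₂ : u ∈ S₂ := (hU.superset trivial : u ∈ S₁ ∪ S₂).resolve_left hu₁
      obtain ⟨e, he, hunique⟩ := huniq₂ u hu₂ fun h => hu₁ (h ▸ hv)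
      refine ⟨e, ⟨.inr he.1, he.2⟩, fun e' ⟨he', hhead⟩ => he'.elim (fun he' => ?_)
        (hunique e' ⟨·, hhead⟩)⟩
      subst hhead
      exact absurd (hmem₁ e' he').2.1 hu₁
  · exact (hmem₂ e he).2.2 (hI.subset ⟨hv₁' ▸ hv₁, (hmem₂ e he).2.1⟩)
  · have lift₁ := Relation.ReflTransGen.mono (r := fun a b => ∃ e ∈ A₁, d e = (a, b))
      (p := fun a b => ∃ e ∈ A₁ ∪ A₂, d e = (a, b)) fun _ _ ⟨e, he, hde⟩ => ⟨e, .inl he, hde⟩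
    have lift₂ := Relation.ReflTransGen.mono (r := fun a b => ∃ e ∈ A₂, d e = (a, b))
      (p := fun a b => ∃ e ∈ A₁ ∪ A₂, d e = (a, b)) fun _ _ ⟨e, he, hde⟩ => ⟨e, .inr he, hde⟩
    rcases (hU.superset trivial : u ∈ S₁ ∪ S₂) with hu | hu
    · exact lift₁ _ _ (hreach₁ u hu)
    · exact (lift₁ _ _ (hreach₁ v hv)).trans (lift₂ _ _ (hreach₂ u hu))


theorem IsArbPacking.coupling_of_oneSum {ι κ : Type*} [Fintype ι] [Fintype κ] {w : E → ℝ}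
    {lam₁ : ι → ℝ} {lam₂ : κ → ℝ} {A₁ : ι → Set E} {A₂ : κ → Set E} {μ : ι → κ → ℝ}
    (hU : S₁ ∪ S₂ = univ) (hI : S₁ ∩ S₂ = {v}) (hv₁ : v₁ ∈ S₁)
    (h₁ : IsArbPacking ends E₁ S₁ w d v₁ lam₁ A₁) (h₂ : IsArbPacking ends E₁ᶜ S₂ w d v lam₂ A₂)
    (hμ : ∀ i j, 0 ≤ μ i j) (hrow : ∀ i, ∑ j, μ i j ≤ lam₁ i) (hcol : ∀ j, ∑ i, μ i j ≤ lam₂ j) :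
    IsArbPacking ends univ univ w d v₁ (fun p : ι × κ => μ p.1 p.2)
      (fun p => A₁ p.1 ∪ A₂ p.2) := by
  refine ⟨fun p => hμ p.1 p.2, fun p => (h₁.2.1 p.1).union_of_oneSum hU hI hv₁ (h₂.2.1 p.2),
    fun e _ => ?_⟩
  rw [Fintype.sum_prod_type]
  by_cases he : e ∈ E₁
  · have hA₂ : ∀ j, e ∉ A₂ j := fun j h => (h₂.2.1 j).1 h he
    calc _ = ∑ i, if e ∈ A₁ i then ∑ j, μ i j else 0 := by
          simp only [mem_union, hA₂, or_false, Finset.sum_ite_irrel, Finset.sum_const_zero]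
      _ ≤ ∑ i, if e ∈ A₁ i then lam₁ i else 0 :=
          Finset.sum_le_sum fun i _ => by split_ifs; exacts [hrow i, le_rfl]
      _ ≤ w e := h₁.2.2 e he
  · have hA₁ : ∀ i, e ∉ A₁ i := fun i h => he ((h₁.2.1 i).1 h)
    calc _ = ∑ j, if e ∈ A₂ j then ∑ i, μ i j else 0 := by
          rw [Finset.sum_comm]
          simp only [mem_union, hA₁, false_or, Finset.sum_ite_irrel, Finset.sum_const_zero]
      _ ≤ ∑ j, if e ∈ A₂ j then lam₂ j else 0 :=
          Finset.sum_le_sum fun j _ => by split_ifs; exacts [hcol j, le_rfl]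
      _ ≤ w e := h₂.2.2 e he

theorem min_mem_packingValues_oneSum {w : E → ℝ} {x₁ x₂ : ℝ} (hU : S₁ ∪ S₂ = univ)
    (hI : S₁ ∩ S₂ = {v}) (hE₁ : ∀ e ∈ E₁, ∀ x ∈ ends e, x ∈ S₁)
    (hE₂ : ∀ e ∈ E₁ᶜ, ∀ x ∈ ends e, x ∈ S₂) (hx₁ : x₁ ∈ packingValues ends E₁ S₁ w v₁)
    (hx₂ : x₂ ∈ packingValues ends E₁ᶜ S₂ w v) :
    min x₁ x₂ ∈ packingValues ends univ univ w v₁ := by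
  obtain ⟨d₁, hd₁, t₁, lam₁, A₁, hP₁, rfl⟩ := hx₁
  obtain ⟨d₂, hd₂, t₂, lam₂, A₂, hP₂, rfl⟩ := hx₂
  set d := E₁.piecewise d₁ d₂
  have hdd₁ : EqOn d₁ d E₁ := (piecewise_eqOn E₁ d₁ d₂).symm
  have hdd₂ : EqOn d₂ d E₁ᶜ := (piecewise_eqOn_compl E₁ d₁ d₂).symm
  obtain ⟨hor₁, hac₁, hrt₁⟩ := hd₁.congr hdd₁
  obtain ⟨hor₂, hac₂, hrt₂⟩ := hd₂.congr hdd₂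
  have hor := hor₁.univ_of_compl hor₂
  obtain ⟨μ, hμ, hrow, hcol, hsum⟩ := exists_coupling_sum_eq_min hP₁.1 hP₂.1
  rw [← hsum, ← Fintype.sum_prod_type']
  have hP := (hP₁.congr hdd₁).coupling_of_oneSum hU hI hrt₁.1 (hP₂.congr hdd₂) hμ hrow hcol
  exact hP.sum_mem_packingValues
    ⟨hor, hac₁.univ_of_oneSum hI hE₁ hE₂ hor hac₂, hrt₁.univ_of_oneSum hU hI hE₂ hor₂ hrt₂⟩

end OneSum

theorem stmt_6_general [Fintype V] [Fintype E] (ends : E → Sym2 V) (w : E → ℝ)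
    (S₁ S₂ : Set V) (E₁ : Set E) (v v₁ : V)
    (hU : S₁ ∪ S₂ = Set.univ) (hI : S₁ ∩ S₂ = {v})
    (hS₁ : ∃ u ∈ S₁, u ≠ v) (hS₂ : ∃ u ∈ S₂, u ≠ v)
    (hE₁ : ∀ e ∈ E₁, ∀ x ∈ ends e, x ∈ S₁)
    (hE₂ : ∀ e ∈ E₁ᶜ, ∀ x ∈ ends e, x ∈ S₂)
    (hv₁ : v₁ ∈ S₁) :
    kOn ends Set.univ Set.univ w v₁ =
      min (kOn ends E₁ S₁ w v₁) (kOn ends E₁ᶜ S₂ w v) := by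
  have hS₁' : ∃ u ∈ S₁, u ≠ v₁ := by
    obtain ⟨u, hu, huv⟩ := hS₁
    by_cases h : v₁ = v
    · exact ⟨u, hu, h ▸ huv⟩
    · exact ⟨v, (hI.superset rfl).1, Ne.symm h⟩
  simp only [kOn_eq_sSup_packingValues]
  exact Real.sSup_eq_min_of_subset_of_min_mem (bddAbove_packingValues hS₁')
    (bddAbove_packingValues hS₂) (fun _ => nonneg_of_mem_packingValues)
    (fun _ => nonneg_of_mem_packingValues) (packingValues_subset_left hI hv₁ hE₁ hE₂)
    (packingValues_subset_right hI hv₁ hE₁ hE₂)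
    fun _ hx₁ _ hx₂ => min_mem_packingValues_oneSum hU hI hE₁ hE₂ hx₁ hx₂

/-- If `G` is the 1-sum of two (nontrivial) graphs `G₁` (vertices `S₁`,
edges `E₁`) and `G₂` (vertices `S₂`, edges `E₁ᶜ`) glued at the single common vertex `v`,
then for any `v₁ ∈ S₁`, `k(G, w, v₁) = min (k(G₁, w₁, v₁)) (k(G₂, w₂, v))`. -/
theorem stmt_6 [Fintype V] [Fintype E] (ends : E → Sym2 V) (w : E → ℝ)
    (hw : ∀ e, 0 ≤ w e) (S₁ S₂ : Set V) (E₁ : Set E) (v v₁ : V)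
    (hU : S₁ ∪ S₂ = Set.univ) (hI : S₁ ∩ S₂ = {v})
    (hS₁ : ∃ u ∈ S₁, u ≠ v) (hS₂ : ∃ u ∈ S₂, u ≠ v)
    (hE₁ : ∀ e ∈ E₁, ∀ x ∈ ends e, x ∈ S₁)
    (hE₂ : ∀ e ∈ E₁ᶜ, ∀ x ∈ ends e, x ∈ S₂)
    (hv₁ : v₁ ∈ S₁) :
    kOn ends Set.univ Set.univ w v₁ =
      min (kOn ends E₁ S₁ w v₁) (kOn ends E₁ᶜ S₂ w v) :=
  stmt_6_general ends w S₁ S₂ E₁ v v₁ hU hI hS₁ hS₂ hE₁ hE₂ hv₁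
end Orientations
end

section
/- There is an outerplanar graph G (a 4-cycle) with nonnegative edge weights w such that the maximum weighted packing of (undirected) spanning trees k_u(G, w) = 2 strictly exceeds k(G, w) = 1, the maximum over roots r and r-acyclic orientations of the maximum weighted packing of r-arborescences. Concretely, take the 4-cycle abcda with w({a,b}) = w({c,d}) = 2 and w({a,d}) = w({b,c}) = 1. -/
open scoped Classical

variable {V E : Type*}

/-- `kU ends w`: the maximum value of a weighted packing of (undirected) spanning trees
of the multigraph with edge-endpoint map `ends`, subject to the capacities `w`. A
spanning tree is a set of `|V| - 1` edges connecting all vertices. -/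
noncomputable def kU [Fintype V] [Fintype E] (ends : E → Sym2 V) (w : E → ℝ) : ℝ :=
  sSup {x : ℝ | ∃ (t : ℕ) (lam : Fin t → ℝ) (T : Fin t → Set E),
    (∀ i, 0 ≤ lam i) ∧
    (∀ i, (∀ a b : V, Relation.ReflTransGen
        (fun x y => ∃ e ∈ T i, ends e = s(x, y)) a b) ∧
      (T i).ncard = Fintype.card V - 1) ∧
    (∀ e, ∑ i, (if e ∈ T i then lam i else 0) ≤ w e) ∧
    x = ∑ i, lam i}

/-!
The light edges `1 = {1,2}` and `3 = {3,0}` (weight 1) form a perfect matching of the 4-cycle.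
Every spanning tree has three of the four edges, hence contains a light edge, so a packing of
spanning trees has value at most `w 1 + w 3 = 2`; the two spanning paths missing edge `3`,
resp. edge `1`, attain it.

An orientation of a cycle has as many sources as sinks, so a rooted orientation has the root as
its only source and a unique sink; the other two vertices have in-degree one. The light edge at
the root enters a vertex `u`; if `u` is not the sink, that light edge is the only edge entering
`u`, otherwise the other light edge avoids the root and the sink and is the only edge entering
its head. Every arborescence must use this light edge, so a packing of arborescences has value
at most `1`, which a single arborescence attains.
-/

theorem sum_le_sum_of_forall_exists_mem {ι E : Type*} [Fintype ι] (s : Finset E) (lam : ι → ℝ)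
    (A : ι → Set E) (w : E → ℝ) (hlam : ∀ i, 0 ≤ lam i) (hhit : ∀ i, ∃ e ∈ s, e ∈ A i)
    (hcap : ∀ e ∈ s, ∑ i, (if e ∈ A i then lam i else 0) ≤ w e) :
    ∑ i, lam i ≤ ∑ e ∈ s, w e := by
  have hlam_le : ∀ i, lam i ≤ ∑ e ∈ s, (if e ∈ A i then lam i else 0) := by
    intro i
    obtain ⟨e, hes, hei⟩ := hhit i
    calc lam i = if e ∈ A i then lam i else 0 := (if_pos hei).symm
      _ ≤ _ := Finset.single_le_sum (f := fun e => if e ∈ A i then lam i else 0)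
          (fun e _ => by split_ifs <;> simp [hlam i]) hes
  calc ∑ i, lam i ≤ ∑ i, ∑ e ∈ s, (if e ∈ A i then lam i else 0) :=
        Finset.sum_le_sum fun i _ => hlam_le i
    _ = ∑ e ∈ s, ∑ i, (if e ∈ A i then lam i else 0) := Finset.sum_comm
    _ ≤ ∑ e ∈ s, w e := Finset.sum_le_sum hcap

theorem Set.exists_mem_of_card_compl_lt_ncard {α : Type*} [Fintype α] (s : Finset α) (T : Set α)
    (h : sᶜ.card < T.ncard) : ∃ e ∈ s, e ∈ T := by
  by_contra! hT
  have hsub : T ⊆ ↑sᶜ := fun e he => Finset.mem_compl.mpr fun hes => hT e hes he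
  have := Set.ncard_le_ncard hsub
  rw [Set.ncard_coe_finset] at this
  omega

section Orientation

variable {V E : Type*} {ends : E → Sym2 V} {F : Set E} {S : Set V} {d : E → V × V} {r : V}

theorem arcRel_univ_iff (hloop : ∀ e, ¬ (ends e).IsDiag) (u v : V) :
    arcRel ends Set.univ d u v ↔ ∃ e, d e = (u, v) :=
  ⟨fun ⟨e, _, _, he⟩ => ⟨e, he⟩, fun ⟨e, he⟩ => ⟨e, Set.mem_univ e, hloop e, he⟩⟩

theorem IsOrientation.apply_eq_or (hd : IsOrientation ends F d) {e : E} (he : e ∈ F)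
    (hloop : ¬ (ends e).IsDiag) {x y : V} (hxy : ends e = s(x, y)) :
    d e = (x, y) ∨ d e = (y, x) := by
  have := hxy.symm.trans (hd e he hloop)
  rcases Sym2.eq_iff.mp this with ⟨h1, h2⟩ | ⟨h1, h2⟩
  · exact Or.inl (Prod.ext h1.symm h2.symm)
  · exact Or.inr (Prod.ext h2.symm h1.symm)

theorem acyclicOn_of_lt {α : Type*} [Preorder α] (f : V → α)
    (hf : ∀ u v, arcRel ends F d u v → f u < f v) : AcyclicOn ends F d := by
  intro v hv
  have : Relation.TransGen (· < ·) (f v) (f v) := Relation.TransGen.lift f hf _ _ hv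
  rw [Relation.transGen_eq_self] at this
  exact lt_irrefl _ this

theorem IsArbM.mem_of_forall_head_eq {A : Set E} (hA : IsArbM ends F S d r A) {v : V}
    (hv : v ∈ S) (hvr : v ≠ r) {e₀ : E} (he₀ : ∀ e ∈ F, (d e).2 = v → e = e₀) : e₀ ∈ A := by
  obtain ⟨hAF, -, hin, -, -⟩ := hA
  obtain ⟨e, ⟨heA, hev⟩, -⟩ := hin v hv hvr
  exact he₀ e (hAF heA) hev ▸ heA

end Orientation

section Cycle

variable {n : ℕ} [NeZero n]

open Fin.NatCast in
theorem reflTransGen_cycle_compl_singleton (j a b : Fin n) :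
    Relation.ReflTransGen (fun x y => ∃ e ∈ ({j}ᶜ : Set (Fin n)), s(e, e + 1) = s(x, y)) a b := by
  set R := fun x y : Fin n => ∃ e ∈ ({j}ᶜ : Set (Fin n)), s(e, e + 1) = s(x, y)
  have hpath : ∀ m : ℕ, m < n → Relation.ReflTransGen R (j + 1) (j + 1 + (m : Fin n)) := by
    intro m
    induction m with
    | zero => intro _; simpa using Relation.ReflTransGen.refl
    | succ m ih =>
      intro hm
      refine (ih (by omega)).tail ⟨j + 1 + (m : Fin n), ?_, ?_⟩
      · have : ((m + 1 : ℕ) : Fin n) ≠ 0 := by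
          rw [Ne, Fin.natCast_eq_zero]
          exact Nat.not_dvd_of_pos_of_lt (by omega) hm
        rw [Set.mem_compl_singleton_iff, Ne, add_assoc, add_eq_left, add_comm]
        exact_mod_cast this
      · rw [Nat.cast_succ, ← add_assoc]
  have hreach : ∀ x, Relation.ReflTransGen R (j + 1) x := fun x => by
    simpa using hpath (x - (j + 1)).val (x - (j + 1)).isLt
  have : Std.Symm R := ⟨fun x y ⟨e, he, hexy⟩ => ⟨e, he, hexy.trans Sym2.eq_swap⟩⟩
  exact (Relation.ReflTransGen.stdSymm.symm _ _ (hreach a)).trans (hreach b)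

end Cycle

theorem Set.ncard_compl_singleton {α : Type*} [Fintype α] (a : α) :
    ({a}ᶜ : Set α).ncard = Fintype.card α - 1 := by
  rw [Set.ncard_compl, Nat.card_eq_fintype_card, Set.ncard_singleton]

local notation "C₄" => fun i : Fin 4 => s(i, i + 1)
local notation "w₄" => (![2, 1, 2, 1] : Fin 4 → ℝ)

theorem cycle₄_not_isDiag (i : Fin 4) : ¬ (C₄ i).IsDiag := by
  revert i; decide

def cycle₄Orient (b : Fin 4 → Bool) (e : Fin 4) : Fin 4 × Fin 4 :=
  if b e then (e, e + 1) else (e + 1, e)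

theorem isOrientation_cycle₄Orient (b : Fin 4 → Bool) :
    IsOrientation C₄ Set.univ (cycle₄Orient b) := by
  intro e _ _
  unfold cycle₄Orient
  split
  · rfl
  · exact Sym2.eq_swap

theorem IsOrientation.exists_eq_cycle₄Orient {d : Fin 4 → Fin 4 × Fin 4}
    (hd : IsOrientation C₄ Set.univ d) : ∃ b, d = cycle₄Orient b := by
  have hne : ∀ e : Fin 4, (e + 1, e) ≠ (e, e + 1) := by decide
  refine ⟨fun e => decide (d e = (e, e + 1)), funext fun e => ?_⟩
  rcases hd.apply_eq_or (Set.mem_univ e) (cycle₄_not_isDiag e) rfl with h | h <;>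
    simp [cycle₄Orient, h, hne]

theorem cycle₄Orient_exists_light_sole_in_edge (b : Fin 4 → Bool) (r : Fin 4)
    (hr : ∀ u e, cycle₄Orient b e ≠ (u, r))
    (hsrc : ∀ v, (∀ u e, cycle₄Orient b e ≠ (u, v)) → v = r) :
    ∃ e₀, (e₀ = 1 ∨ e₀ = 3) ∧ (cycle₄Orient b e₀).2 ≠ r ∧
      ∀ e, (cycle₄Orient b e).2 = (cycle₄Orient b e₀).2 → e = e₀ := by
  revert b r; decide

theorem sum_le_one_of_cycle₄_arborescence_packing {r : Fin 4} {d : Fin 4 → Fin 4 × Fin 4}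
    (hd : IsOrientation C₄ Set.univ d) (hroot : RootedAt C₄ Set.univ Set.univ d r)
    {t : ℕ} {lam : Fin t → ℝ} {A : Fin t → Set (Fin 4)} (hlam : ∀ i, 0 ≤ lam i)
    (hA : ∀ i, IsArbM C₄ Set.univ Set.univ d r (A i))
    (hcap : ∀ e ∈ Set.univ, ∑ i, (if e ∈ A i then lam i else 0) ≤ w₄ e) :
    ∑ i, lam i ≤ 1 := by
  obtain ⟨b, rfl⟩ := hd.exists_eq_cycle₄Orient
  obtain ⟨-, hr, hsrc⟩ := hroot
  simp only [arcRel_univ_iff cycle₄_not_isDiag, not_exists, Set.mem_univ, true_implies] at hr hsrc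
  obtain ⟨e₀, hlight, hne, huniq⟩ := cycle₄Orient_exists_light_sole_in_edge b r hr hsrc
  have hmem : ∀ i, e₀ ∈ A i := fun i =>
    (hA i).mem_of_forall_head_eq (Set.mem_univ _) hne fun e _ he => huniq e he
  calc ∑ i, lam i ≤ ∑ e ∈ {e₀}, w₄ e :=
        sum_le_sum_of_forall_exists_mem {e₀} lam A w₄ hlam
          (fun i => ⟨e₀, Finset.mem_singleton_self _, hmem i⟩)
          (by simpa using hcap e₀ (Set.mem_univ _))
    _ = 1 := by rcases hlight with rfl | rfl <;> simp

theorem kOn_cycle₄_le_one (r : Fin 4) : kOn C₄ Set.univ Set.univ w₄ r ≤ 1 := by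
  refine Real.sSup_le ?_ zero_le_one
  rintro x ⟨d, hd, -, hroot, t, lam, A, hlam, hA, hcap, rfl⟩
  exact sum_le_one_of_cycle₄_arborescence_packing hd hroot hlam hA hcap

theorem isArbM_cycle₄Orient_compl_two :
    IsArbM C₄ Set.univ Set.univ (cycle₄Orient ![true, true, false, false]) 0 {2}ᶜ := by
  have hA : ∀ e : Fin 4, e ≠ 2 → e ∈ ({2}ᶜ : Set (Fin 4)) := fun e => Set.mem_compl_singleton_iff.mpr
  refine ⟨Set.subset_univ _, fun e _ => cycle₄_not_isDiag e, ?_, ?_, ?_⟩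
  · intro v _ hv
    simp only [Set.mem_compl_singleton_iff, ExistsUnique]
    revert v hv
    decide
  · intro e _
    exact ⟨Set.mem_univ _, Set.mem_univ _, by revert e; decide⟩
  · intro v _
    have h0 : ∃ e ∈ ({2}ᶜ : Set (Fin 4)), cycle₄Orient ![true, true, false, false] e = (0, 1) :=
      ⟨0, hA 0 (by decide), rfl⟩
    fin_cases v
    · exact .refl
    · exact .single h0
    · exact .tail (.single h0) ⟨1, hA 1 (by decide), rfl⟩
    · exact .single ⟨3, hA 3 (by decide), rfl⟩

theorem kOn_cycle₄_zero : kOn C₄ Set.univ Set.univ w₄ 0 = 1 := by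
  refine IsGreatest.csSup_eq ⟨?_, ?_⟩
  · have hrank : ∀ e, (![0, 1, 2, 1] : Fin 4 → ℕ) (cycle₄Orient ![true, true, false, false] e).1 <
        (![0, 1, 2, 1] : Fin 4 → ℕ) (cycle₄Orient ![true, true, false, false] e).2 := by decide
    refine ⟨cycle₄Orient ![true, true, false, false], isOrientation_cycle₄Orient _,
      acyclicOn_of_lt ![0, 1, 2, 1] ?_, ⟨Set.mem_univ _, ?_, ?_⟩,
      1, fun _ => 1, fun _ => {2}ᶜ, fun _ => zero_le_one,
      fun _ => isArbM_cycle₄Orient_compl_two, ?_, by simp⟩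
    · intro u v huv
      obtain ⟨e, he⟩ := (arcRel_univ_iff cycle₄_not_isDiag u v).mp huv
      simpa [he] using hrank e
    · simp only [arcRel_univ_iff cycle₄_not_isDiag, not_exists]
      decide
    · simp only [arcRel_univ_iff cycle₄_not_isDiag, not_exists, Set.mem_univ, true_implies]
      decide
    · intro e _
      fin_cases e <;> simp
  · rintro x ⟨d, hd, -, hroot, t, lam, A, hlam, hA, hcap, rfl⟩
    exact sum_le_one_of_cycle₄_arborescence_packing hd hroot hlam hA hcap

theorem kU_cycle₄ : kU C₄ w₄ = 2 := by
  refine IsGreatest.csSup_eq ⟨?_, ?_⟩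
  · refine ⟨2, fun _ => 1, ![{3}ᶜ, {1}ᶜ], fun _ => zero_le_one, fun i => ?_, fun e => ?_,
      by norm_num⟩
    · fin_cases i
      · exact ⟨reflTransGen_cycle_compl_singleton 3, Set.ncard_compl_singleton 3⟩
      · exact ⟨reflTransGen_cycle_compl_singleton 1, Set.ncard_compl_singleton 1⟩
    · rw [Fin.sum_univ_two]
      fin_cases e <;> norm_num [Fin.ext_iff]
  · rintro x ⟨t, lam, T, hlam, hT, hcap, rfl⟩
    have hlight : ∀ i, ∃ e ∈ ({1, 3} : Finset (Fin 4)), e ∈ T i := fun i =>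
      Set.exists_mem_of_card_compl_lt_ncard _ _ (by simp [(hT i).2, Finset.card_compl])
    calc ∑ i, lam i ≤ ∑ e ∈ {1, 3}, w₄ e :=
          sum_le_sum_of_forall_exists_mem _ lam T w₄ hlam hlight fun e _ => hcap e
      _ = 2 := by simp [Matrix.cons_val]; norm_num

theorem kAll_cycle₄ : kAll C₄ Set.univ Set.univ w₄ = 1 := by
  refine IsGreatest.csSup_eq ⟨⟨0, Set.mem_univ 0, kOn_cycle₄_zero⟩, ?_⟩
  rintro x ⟨r, -, rfl⟩
  exact kOn_cycle₄_le_one r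

/-- For the 4-cycle `abcda` (an outerplanar graph) with weights
`w(ab) = w(cd) = 2` and `w(bc) = w(da) = 1`, the maximum weighted spanning-tree packing
value is `k_u = 2`, while the broadcast value is `k = 1`; in particular `k < k_u`. -/
theorem stmt_11 :
    kU (fun i : Fin 4 => s(i, i + 1)) (![2, 1, 2, 1] : Fin 4 → ℝ) = 2 ∧
    kAll (fun i : Fin 4 => s(i, i + 1)) Set.univ Set.univ
      (![2, 1, 2, 1] : Fin 4 → ℝ) = 1 ∧
    kAll (fun i : Fin 4 => s(i, i + 1)) Set.univ Set.univ (![2, 1, 2, 1] : Fin 4 → ℝ) <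
      kU (fun i : Fin 4 => s(i, i + 1)) (![2, 1, 2, 1] : Fin 4 → ℝ) := by
  refine ⟨kU_cycle₄, kAll_cycle₄, ?_⟩
  rw [kU_cycle₄, kAll_cycle₄]
  norm_num
end
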